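/- Time-increment bound for the Laplacian of the scheme: for every f ∈ C^4(ℝ^d), every integer n ≥ 1, every x ∈ ℝ^d and every t ≥ 0, |tr(D²u_n(x, t + 1/n)) − tr(D²u_n(x,t))| ≤ d · ‖f‖_{C^4} · tr(Σ) / (2n), where D²u_n denotes the Hessian of u_n in the spatial variable. -/

import Mathlib

open MeasureTheory ProbabilityTheory Filter Topology Set

noncomputable section

abbrev Euc (d : ℕ) : Type := EuclideanSpace ℝ (Fin d)

/-- The quadratic form `aᵀ S a`. -/
def quadForm {d : ℕ} (S : Matrix (Fin d) (Fin d) ℝ) (a : Euc d) : ℝ :=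
  ∑ i, ∑ j, a i * S i j * a j

/-- `ν` is the centered Gaussian measure on `ℝ^d` with covariance matrix `S`:
every linear functional pushes forward to a one-dimensional centered Gaussian with
the appropriate variance. -/
def IsCenteredGaussianMeasure {d : ℕ} (S : Matrix (Fin d) (Fin d) ℝ)
    (ν : Measure (Euc d)) : Prop :=
  IsProbabilityMeasure ν ∧
  ∀ a : Euc d, ν.map (fun x => ∑ i, a i * x i) = gaussianReal 0 (quadForm S a).toNNReal

/-- The covariance matrix of a random vector `Y`. -/
def covMatrix {d : ℕ} {Ω : Type} [MeasurableSpace Ω] (μ : Measure Ω) (Y : Ω → Euc d) :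
    Matrix (Fin d) (Fin d) ℝ :=
  Matrix.of fun i j => ∫ ω, Y ω i * Y ω j ∂μ

/-- The i.i.d., centered, square-integrable hypothesis, with covariance matrix `S`. -/
structure IsIIDCentered {d : ℕ} {Ω : Type} [MeasurableSpace Ω] (μ : Measure Ω)
    (X : ℕ → Ω → Euc d) (S : Matrix (Fin d) (Fin d) ℝ) : Prop where
  meas : ∀ i, Measurable (X i)
  indep : iIndepFun X μ
  ident : ∀ i, μ.map (X i) = μ.map (X 0)
  sqInt : MemLp (X 0) 2 μ
  centered : ∫ ω, X 0 ω ∂μ = 0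
  covEq : covMatrix μ (X 0) = S

/-- Partial sums `S_n = X_1 + ⋯ + X_n`. -/
def pSum {d : ℕ} {Ω : Type} (X : ℕ → Ω → Euc d) (n : ℕ) (ω : Ω) : Euc d :=
  ∑ i ∈ Finset.range n, X i ω

/-- `f ∈ C^k(ℝ^d)`: all derivatives up to order `k` exist and are uniformly bounded. -/
def MemCk {d : ℕ} (k : ℕ) (f : Euc d → ℝ) : Prop :=
  ContDiff ℝ k f ∧ ∀ i ≤ k, ∃ M, ∀ x, ‖iteratedFDeriv ℝ i f x‖ ≤ M

/-- The `C^k` norm of `f`: the sum of the sup norms of the derivatives of order up to `k`. -/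
def ckNorm {d : ℕ} (k : ℕ) (f : Euc d → ℝ) : ℝ :=
  ∑ i ∈ Finset.range (k + 1), ⨆ x, ‖iteratedFDeriv ℝ i f x‖

/-- The Hessian matrix (in space) of `f` at `x`. -/
def hessian {d : ℕ} (f : Euc d → ℝ) (x : Euc d) : Matrix (Fin d) (Fin d) ℝ :=
  Matrix.of fun i j =>
    iteratedFDeriv ℝ 2 f x ![EuclideanSpace.single i 1, EuclideanSpace.single j 1]

/-- The discrete scheme `u_n(x,t) = E[f(x + S_{⌊nt⌋}/√n)]`. -/
def schemeU {d : ℕ} {Ω : Type} [MeasurableSpace Ω] (μ : Measure Ω) (X : ℕ → Ω → Euc d)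
    (f : Euc d → ℝ) (n : ℕ) (x : Euc d) (t : ℝ) : ℝ :=
  ∫ ω, f (x + (Real.sqrt n)⁻¹ • pSum X ⌊(n : ℝ) * t⌋₊ ω) ∂μ

/-- The heat semigroup `u(x,t) = E[f(x + √t ξ)]`, where `ξ ∼ ν`. -/
def heatU {d : ℕ} (ν : Measure (Euc d)) (f : Euc d → ℝ) (x : Euc d) (t : ℝ) : ℝ :=
  ∫ y, f (x + Real.sqrt t • y) ∂ν

/-- `u` is twice continuously differentiable in space and once continuously differentiable in
time on `ℝ^d × (0,∞)`. -/
def IsC21 {d : ℕ} (u : Euc d → ℝ → ℝ) : Prop :=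
  (∀ t > (0:ℝ), ContDiff ℝ 2 (fun x => u x t)) ∧
  (∀ x : Euc d, ContDiffOn ℝ 1 (u x) (Set.Ioi 0))

/-! With `m = ⌊nt⌋`, advancing `t` by `1/n` adds the increment `X_m/√n` to the walk, and the
Hessian of `u_n(·, t)` at `x` is the expectation of the Hessian of `f` at `x + S_m/√n`. So each
diagonal entry of the difference is `E[q(W + h)] - E[q(W)]` with `q = ∂ᵢ∂ᵢ f`, `W = x + S_m/√n`
and `h = X_m/√n` independent of `W`. Expanding `q` to second order around `W`, the linear term
has mean zero because `h` is centered and independent of `W`, and the remainder is at most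
`‖D²q‖∞ E‖h‖²/2 ≤ ‖f‖_{C⁴} tr(Σ)/(2n)`. Summing the `d` diagonal entries gives the bound. -/

section Calculus

variable {E F : Type*} [NormedAddCommGroup E] [NormedSpace ℝ E]
  [NormedAddCommGroup F] [NormedSpace ℝ F]

theorem norm_sub_sub_deriv_le_of_norm_deriv_deriv_le {φ φ' φ'' : ℝ → F} {K : ℝ}
    (hφ : ∀ s, HasDerivAt φ (φ' s) s) (hφ' : ∀ s, HasDerivAt φ' (φ'' s) s)
    (hK : ∀ s, ‖φ'' s‖ ≤ K) :
    ‖φ 1 - φ 0 - φ' 0‖ ≤ K / 2 := by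
  have hslope : ∀ s ∈ Icc (0 : ℝ) 1, ‖φ' s - φ' 0‖ ≤ K * (s - 0) :=
    norm_image_sub_le_of_norm_deriv_le_segment' (fun s _ => (hφ' s).hasDerivWithinAt)
      (fun s _ => hK s)
  have hR : ∀ s, HasDerivAt (fun s => φ s - φ 0 - s • φ' 0) (φ' s - φ' 0) s := fun s => by
    simpa using ((hφ s).sub_const (φ 0)).fun_sub ((hasDerivAt_id s).smul_const (φ' 0))
  have hB : ∀ s : ℝ, HasDerivAt (fun s => K / 2 * s ^ 2) (K * s) s := fun s =>
    ((hasDerivAt_pow 2 s).const_mul (K / 2)).congr_deriv (by push_cast; ring)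
  simpa using image_norm_le_of_norm_deriv_right_le_deriv_boundary (a := 0) (b := 1)
    (fun s _ => (hR s).continuousAt.continuousWithinAt) (fun s _ => (hR s).hasDerivWithinAt)
    (by simp) hB (fun s hs => by simpa using hslope s (Ico_subset_Icc_self hs))
    (right_mem_Icc.2 zero_le_one)

theorem norm_sub_sub_fderiv_le {g : E → F} (hg : ContDiff ℝ 2 g) {M : ℝ}
    (hM : ∀ z, ‖iteratedFDeriv ℝ 2 g z‖ ≤ M) (y h : E) :
    ‖g (y + h) - g y - fderiv ℝ g y h‖ ≤ M / 2 * ‖h‖ ^ 2 := by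
  have hline : ∀ s : ℝ, HasDerivAt (fun s : ℝ => y + s • h) h s := fun s => by
    simpa using ((hasDerivAt_id s).smul_const h).const_add y
  have hg₁ : Differentiable ℝ g := hg.differentiable (by norm_num)
  have hg₂ : Differentiable ℝ (fderiv ℝ g) :=
    (hg.fderiv_right (m := 1) (by norm_num)).differentiable one_ne_zero
  have hbound (z : E) : ‖fderiv ℝ (fderiv ℝ g) z h h‖ ≤ M * ‖h‖ ^ 2 :=
    calc ‖fderiv ℝ (fderiv ℝ g) z h h‖ = ‖iteratedFDeriv ℝ 2 g z ![h, h]‖ := by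
          rw [iteratedFDeriv_two_apply]; rfl
      _ ≤ ‖iteratedFDeriv ℝ 2 g z‖ * ∏ i, ‖![h, h] i‖ := ContinuousMultilinearMap.le_opNorm _ _
      _ ≤ M * ‖h‖ ^ 2 := by simpa [sq] using mul_le_mul_of_nonneg_right (hM z) (by positivity)
  have key := norm_sub_sub_deriv_le_of_norm_deriv_deriv_le (φ := fun s => g (y + s • h))
    (fun s => (hg₁ _).hasFDerivAt.comp_hasDerivAt s (hline s))
    (fun s => (ContinuousLinearMap.apply ℝ F h).hasFDerivAt.comp_hasDerivAt s
      ((hg₂ _).hasFDerivAt.comp_hasDerivAt s (hline s)))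
    (fun s => hbound (y + s • h))
  convert key using 1
  · simp
  · ring

theorem norm_iteratedFDeriv_fderiv_fderiv_apply_le {k : ℕ} {f : E → F}
    (hf : ContDiff ℝ (k + 2) f) (a b z : E) :
    ‖iteratedFDeriv ℝ k (fun z => fderiv ℝ (fderiv ℝ f) z a b) z‖ ≤
      ‖a‖ * ‖b‖ * ‖iteratedFDeriv ℝ (k + 2) f z‖ := by
  let L : (E →L[ℝ] E →L[ℝ] F) →L[ℝ] F :=
    (ContinuousLinearMap.apply ℝ F b).comp (ContinuousLinearMap.apply ℝ (E →L[ℝ] F) a)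
  have hf₂ : ContDiff ℝ k (fderiv ℝ (fderiv ℝ f)) :=
    (hf.fderiv_right (m := k + 1) (by rw [add_assoc]; norm_num)).fderiv_right le_rfl
  change ‖iteratedFDeriv ℝ k (L ∘ fderiv ℝ (fderiv ℝ f)) z‖ ≤ _
  rw [L.iteratedFDeriv_comp_left hf₂.contDiffAt le_rfl, ← norm_iteratedFDeriv_fderiv,
    ← norm_iteratedFDeriv_fderiv]
  refine ContinuousMultilinearMap.opNorm_le_bound (by positivity) fun m => ?_
  calc ‖iteratedFDeriv ℝ k (fderiv ℝ (fderiv ℝ f)) z m a b‖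
      ≤ ‖iteratedFDeriv ℝ k (fderiv ℝ (fderiv ℝ f)) z m‖ * ‖a‖ * ‖b‖ :=
        ContinuousLinearMap.le_opNorm₂ _ _ _
    _ ≤ ‖iteratedFDeriv ℝ k (fderiv ℝ (fderiv ℝ f)) z‖ * (∏ i, ‖m i‖) * ‖a‖ * ‖b‖ := by
        gcongr; exact ContinuousMultilinearMap.le_opNorm _ _
    _ = _ := by ring

end Calculus

section IntegralOfTranslates

variable {E F : Type*} [NormedAddCommGroup E] [NormedSpace ℝ E]
  [NormedAddCommGroup F] [NormedSpace ℝ F]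
  {Ω : Type*} [MeasurableSpace Ω] {μ : Measure Ω} [IsFiniteMeasure μ]

omit [NormedSpace ℝ E] [NormedSpace ℝ F] in
theorem Continuous.integrable_comp_of_norm_le {f : E → F} (hf : Continuous f) {C : ℝ}
    (hC : ∀ z, ‖f z‖ ≤ C) {Z : Ω → E} (hZ : AEStronglyMeasurable Z μ) :
    Integrable (fun ω => f (Z ω)) μ :=
  .of_bound (hf.comp_aestronglyMeasurable hZ) C (ae_of_all _ fun _ => hC _)

theorem fderiv_integral_comp_add {f : E → F} (hf : ContDiff ℝ 1 f) {C₀ C₁ : ℝ}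
    (hC₀ : ∀ z, ‖f z‖ ≤ C₀) (hC₁ : ∀ z, ‖fderiv ℝ f z‖ ≤ C₁) {Y : Ω → E}
    (hY : AEStronglyMeasurable Y μ) :
    fderiv ℝ (fun x => ∫ ω, f (x + Y ω) ∂μ) = fun x => ∫ ω, fderiv ℝ f (x + Y ω) ∂μ := by
  funext x
  refine (hasFDerivAt_integral_of_dominated_of_fderiv_le (𝕜 := ℝ) (bound := fun _ => C₁)
    (F' := fun z ω => fderiv ℝ f (z + Y ω)) Filter.univ_mem
    (Filter.Eventually.of_forall fun z =>
      hf.continuous.comp_aestronglyMeasurable (hY.const_add z))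
    (hf.continuous.integrable_comp_of_norm_le hC₀ (hY.const_add x))
    ((hf.continuous_fderiv one_ne_zero).comp_aestronglyMeasurable (hY.const_add x))
    (ae_of_all _ fun ω z _ => hC₁ _) (integrable_const C₁)
    (ae_of_all _ fun ω z _ => ?_)).fderiv
  exact ((hf.differentiable one_ne_zero) _).hasFDerivAt.comp z
    ((hasFDerivAt_id z).add_const (Y ω)) |>.congr_fderiv (by simp)

theorem iteratedFDeriv_integral_comp_add [CompleteSpace F] {k : ℕ} {f : E → F}
    (hf : ContDiff ℝ k f) (hbdd : ∀ i ≤ k, ∃ C, ∀ z, ‖iteratedFDeriv ℝ i f z‖ ≤ C) {Y : Ω → E}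
    (hY : AEStronglyMeasurable Y μ) :
    iteratedFDeriv ℝ k (fun x => ∫ ω, f (x + Y ω) ∂μ) =
      fun x => ∫ ω, iteratedFDeriv ℝ k f (x + Y ω) ∂μ := by
  induction k with
  | zero =>
    funext x
    simp only [iteratedFDeriv_zero_eq_comp, Function.comp_apply]
    exact (ContinuousLinearEquiv.integral_comp_comm
      (continuousMultilinearCurryFin0 ℝ E F).symm.toContinuousLinearEquiv _).symm
  | succ k ih =>
    obtain ⟨C₀, hC₀⟩ := hbdd k (by omega)
    obtain ⟨C₁, hC₁⟩ := hbdd (k + 1) le_rfl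
    have hfderiv := fderiv_integral_comp_add
      (hf.iteratedFDeriv_right (m := 1) (i := k) (by push_cast; rw [add_comm]))
      hC₀ (fun z => norm_fderiv_iteratedFDeriv.trans_le (hC₁ z)) hY
    funext x
    simp only [iteratedFDeriv_succ_eq_comp_left, Function.comp_apply]
    rw [ih (hf.of_le (by exact_mod_cast Nat.le_succ k)) (fun i hi => hbdd i (by omega)), hfderiv]
    exact (ContinuousLinearEquiv.integral_comp_comm (μ := μ) (𝕜 := ℝ)
      (E := E →L[ℝ] E [×k]→L[ℝ] F) (F := E [×(k + 1)]→L[ℝ] F)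
      (continuousMultilinearCurryLeftEquiv ℝ (fun _ : Fin (k + 1) => E)
        F).symm.toContinuousLinearEquiv _).symm

end IntegralOfTranslates

section SecondOrderStep

variable {E : Type*} [NormedAddCommGroup E] [NormedSpace ℝ E] [CompleteSpace E]
  [MeasurableSpace E] [BorelSpace E] {Ω : Type*} [MeasurableSpace Ω] {μ : Measure Ω}
  [IsFiniteMeasure μ] {W h : Ω → E}

theorem integral_fderiv_apply_eq_zero_of_indepFun {q : E → ℝ} (hq : ContDiff ℝ 1 q) {C : ℝ}
    (hC : ∀ z, ‖fderiv ℝ q z‖ ≤ C) (hW : AEStronglyMeasurable W μ) (hh : Integrable h μ)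
    (hmean : ∫ ω, h ω ∂μ = 0) (hWh : W ⟂ᵢ[μ] h) :
    ∫ ω, fderiv ℝ q (W ω) (h ω) ∂μ = 0 := by
  -- independence factors `E[Dq(W) h]` as `E[Dq(W)] (E h)`, through the bilinear map `(L, v) ↦ L v`
  have hint : Integrable (fderiv ℝ q) (μ.map W) :=
    (integrable_const C).mono'
      ((hq.continuous_fderiv one_ne_zero).comp_aestronglyMeasurable hW.aestronglyMeasurable_id_map)
      (ae_of_all _ hC)
  simpa [hmean] using hWh.integral_bilin_comp_comp (g := id) hW.aemeasurable hh.aemeasurable hint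
    ((integrable_map_measure hh.aestronglyMeasurable.aestronglyMeasurable_id_map
      hh.aemeasurable).2 hh) (ContinuousLinearMap.id ℝ (E →L[ℝ] ℝ))

theorem abs_integral_comp_add_sub_integral_le {q : E → ℝ} (hq : ContDiff ℝ 2 q)
    (hbdd : ∀ i ≤ 1, ∃ C, ∀ z, ‖iteratedFDeriv ℝ i q z‖ ≤ C) {M : ℝ}
    (hM : ∀ z, ‖iteratedFDeriv ℝ 2 q z‖ ≤ M) (hW : AEStronglyMeasurable W μ)
    (hh : MemLp h 2 μ) (hmean : ∫ ω, h ω ∂μ = 0) (hWh : W ⟂ᵢ[μ] h) :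
    |∫ ω, q (W ω + h ω) ∂μ - ∫ ω, q (W ω) ∂μ| ≤ M / 2 * ∫ ω, ‖h ω‖ ^ 2 ∂μ := by
  obtain ⟨C₀, hC₀⟩ := hbdd 0 zero_le_one
  obtain ⟨C₁, hC₁⟩ := hbdd 1 le_rfl
  simp only [norm_iteratedFDeriv_zero, norm_iteratedFDeriv_one] at hC₀ hC₁
  have hq₁ : ContDiff ℝ 1 q := hq.of_le one_le_two
  have hshift : Integrable (fun ω => q (W ω + h ω)) μ :=
    hq.continuous.integrable_comp_of_norm_le hC₀ (hW.add hh.1)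
  have hbase := hq.continuous.integrable_comp_of_norm_le hC₀ hW
  have hlin : Integrable (fun ω => fderiv ℝ q (W ω) (h ω)) μ := by
    refine ((hh.integrable one_le_two).norm.const_mul C₁).mono' ?_ (ae_of_all _ fun ω => ?_)
    · exact Continuous.comp_aestronglyMeasurable₂ (g := fun (L : E →L[ℝ] ℝ) v => L v)
        (by fun_prop) ((hq₁.continuous_fderiv one_ne_zero).comp_aestronglyMeasurable hW) hh.1
    · exact (ContinuousLinearMap.le_opNorm _ _).trans (by gcongr; exact hC₁ _)
  have hsplit : ∫ ω, q (W ω + h ω) ∂μ - ∫ ω, q (W ω) ∂μ =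
      ∫ ω, (q (W ω + h ω) - q (W ω) - fderiv ℝ q (W ω) (h ω)) ∂μ := by
    rw [integral_sub (f := fun ω => q (W ω + h ω) - q (W ω)) (hshift.sub hbase) hlin,
      ← integral_sub hshift hbase, integral_fderiv_apply_eq_zero_of_indepFun hq₁ hC₁ hW
        (hh.integrable one_le_two) hmean hWh, sub_zero]
  rw [hsplit, ← integral_const_mul, ← Real.norm_eq_abs]
  exact norm_integral_le_of_norm_le ((hh.integrable_norm_pow two_ne_zero).const_mul _)
    (ae_of_all _ fun ω => norm_sub_sub_fderiv_le hq hM _ _)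

end SecondOrderStep

section Euclidean

variable {d : ℕ}

theorem MemCk.of_le {k l : ℕ} {f : Euc d → ℝ} (hf : MemCk k f) (hlk : l ≤ k) : MemCk l f :=
  ⟨hf.1.of_le (by exact_mod_cast hlk), fun i hi => hf.2 i (hi.trans hlk)⟩

theorem MemCk.norm_iteratedFDeriv_le_ckNorm {k i : ℕ} {f : Euc d → ℝ} (hf : MemCk k f)
    (hi : i ≤ k) (z : Euc d) : ‖iteratedFDeriv ℝ i f z‖ ≤ ckNorm k f := by
  obtain ⟨C, hC⟩ := hf.2 i hi
  calc ‖iteratedFDeriv ℝ i f z‖ ≤ ⨆ y, ‖iteratedFDeriv ℝ i f y‖ :=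
        le_ciSup ⟨C, by rintro _ ⟨y, rfl⟩; exact hC y⟩ z
    _ ≤ ckNorm k f :=
        Finset.single_le_sum (f := fun j => ⨆ y, ‖iteratedFDeriv ℝ j f y‖)
          (fun j _ => Real.iSup_nonneg fun _ => norm_nonneg _)
          (Finset.mem_range.2 (Nat.lt_succ_of_le hi))

theorem hessian_apply_eq_fderiv_fderiv (f : Euc d → ℝ) (z : Euc d) (i j : Fin d) :
    hessian f z i j =
      fderiv ℝ (fderiv ℝ f) z (EuclideanSpace.single i 1) (EuclideanSpace.single j 1) := by
  simp [hessian, iteratedFDeriv_two_apply]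

theorem norm_iteratedFDeriv_hessian_apply_le {k : ℕ} {f : Euc d → ℝ}
    (hf : ContDiff ℝ (k + 2) f) (i j : Fin d) (z : Euc d) :
    ‖iteratedFDeriv ℝ k (fun z => hessian f z i j) z‖ ≤ ‖iteratedFDeriv ℝ (k + 2) f z‖ := by
  simpa [hessian_apply_eq_fderiv_fderiv] using norm_iteratedFDeriv_fderiv_fderiv_apply_le hf
    (EuclideanSpace.single i 1) (EuclideanSpace.single j 1) z

theorem MemCk.hessian_apply {k : ℕ} {f : Euc d → ℝ} (hf : MemCk (k + 2) f) (i j : Fin d) :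
    MemCk k (fun z => hessian f z i j) := by
  refine ⟨?_, fun l hl => ?_⟩
  · simp only [hessian_apply_eq_fderiv_fderiv]
    exact ((hf.1.fderiv_right (m := k + 1) (by push_cast; rw [add_assoc]; norm_num)).fderiv_right
      le_rfl).clm_apply contDiff_const |>.clm_apply contDiff_const
  · obtain ⟨C, hC⟩ := hf.2 (l + 2) (by omega)
    exact ⟨C, fun z => (norm_iteratedFDeriv_hessian_apply_le
      (hf.1.of_le (by exact_mod_cast (by omega : l + 2 ≤ k + 2))) i j z).trans (hC z)⟩

theorem hessian_integral_comp_add {Ω : Type*} [MeasurableSpace Ω] {μ : Measure Ω}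
    [IsFiniteMeasure μ] {f : Euc d → ℝ} (hf : MemCk 2 f) {Y : Ω → Euc d}
    (hY : AEStronglyMeasurable Y μ) (x : Euc d) (i j : Fin d) :
    hessian (fun y => ∫ ω, f (y + Y ω) ∂μ) x i j = ∫ ω, hessian f (x + Y ω) i j ∂μ := by
  obtain ⟨C, hC⟩ := hf.2 2 le_rfl
  simp only [hessian, Matrix.of_apply, iteratedFDeriv_integral_comp_add hf.1 hf.2 hY]
  exact ContinuousMultilinearMap.integral_apply
    ((hf.1.continuous_iteratedFDeriv le_rfl).integrable_comp_of_norm_le hC (hY.const_add x)) _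

end Euclidean

namespace IsIIDCentered

variable {d : ℕ} {Ω : Type} [MeasurableSpace Ω] {μ : Measure Ω} {X : ℕ → Ω → Euc d}
  {S : Matrix (Fin d) (Fin d) ℝ}

theorem identDistrib (hX : IsIIDCentered μ X S) (m : ℕ) : IdentDistrib (X m) (X 0) μ μ :=
  ⟨(hX.meas m).aemeasurable, (hX.meas 0).aemeasurable, hX.ident m⟩

theorem memLp (hX : IsIIDCentered μ X S) (m : ℕ) : MemLp (X m) 2 μ :=
  (hX.identDistrib m).symm.memLp_snd hX.sqInt

theorem integral_eq_zero (hX : IsIIDCentered μ X S) (m : ℕ) : ∫ ω, X m ω ∂μ = 0 :=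
  (hX.identDistrib m).integral_eq.trans hX.centered

theorem integral_norm_sq (hX : IsIIDCentered μ X S) (m : ℕ) :
    ∫ ω, ‖X m ω‖ ^ 2 ∂μ = S.trace := by
  have hcoord (j : Fin d) : Integrable (fun ω => X 0 ω j ^ 2) μ :=
    ((EuclideanSpace.proj j : Euc d →L[ℝ] ℝ).comp_memLp' hX.sqInt).integrable_sq
  calc ∫ ω, ‖X m ω‖ ^ 2 ∂μ = ∫ ω, ‖X 0 ω‖ ^ 2 ∂μ :=
        ((hX.identDistrib m).comp (continuous_norm.pow 2).measurable).integral_eq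
    _ = S.trace := by
        simp_rw [EuclideanSpace.real_norm_sq_eq]
        rw [integral_finsetSum _ fun j _ => hcoord j, ← hX.covEq]
        simp only [Matrix.trace, Matrix.diag, covMatrix, Matrix.of_apply, sq]

theorem measurable_pSum (hX : IsIIDCentered μ X S) (m : ℕ) : Measurable (pSum X m) :=
  Finset.measurable_fun_sum _ fun i _ => hX.meas i

theorem indepFun_pSum (hX : IsIIDCentered μ X S) (m : ℕ) : pSum X m ⟂ᵢ[μ] X m := by
  have h := hX.indep.indepFun_sum_range_succ hX.meas m
  rw [Finset.sum_fn] at h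
  exact h

theorem abs_integral_pSum_succ_sub_le [IsFiniteMeasure μ] (hX : IsIIDCentered μ X S)
    {q : Euc d → ℝ} (hq : MemCk 2 q) {M : ℝ} (hM : ∀ z, ‖iteratedFDeriv ℝ 2 q z‖ ≤ M)
    (x : Euc d) (c : ℝ) (m : ℕ) :
    |∫ ω, q (x + c • pSum X (m + 1) ω) ∂μ - ∫ ω, q (x + c • pSum X m ω) ∂μ| ≤
      M / 2 * c ^ 2 * S.trace := by
  have hsucc (ω : Ω) : x + c • pSum X (m + 1) ω = (x + c • pSum X m ω) + c • X m ω := by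
    simp only [pSum, Finset.sum_range_succ, smul_add, add_assoc]
  have hstep := abs_integral_comp_add_sub_integral_le hq.1 (fun i hi => hq.2 i (by omega)) hM
    (((hX.measurable_pSum m).const_smul c).const_add x).aestronglyMeasurable
    ((hX.memLp m).const_smul c)
    (by simp [integral_smul, hX.integral_eq_zero m])
    ((hX.indepFun_pSum m).comp ((measurable_const_smul c).const_add x) (measurable_const_smul c))
  simp only [Pi.smul_apply, ← hsucc, norm_smul, mul_pow, Real.norm_eq_abs, sq_abs] at hstep
  rwa [integral_const_mul, hX.integral_norm_sq m, ← mul_assoc] at hstep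

end IsIIDCentered

theorem scheme_hessian_time_increment_general
    {d : ℕ} {Ω : Type} [MeasurableSpace Ω] (μ : Measure Ω)
    [IsProbabilityMeasure μ] (X : ℕ → Ω → Euc d) (S : Matrix (Fin d) (Fin d) ℝ)
    (hX : IsIIDCentered μ X S)
    (f : Euc d → ℝ) (hf : MemCk 4 f)
    (n : ℕ) (hn : 1 ≤ n) (x : Euc d) (t : ℝ) (ht : 0 ≤ t) :
    |Matrix.trace (hessian (fun y => schemeU μ X f n y (t + 1 / n)) x) -
        Matrix.trace (hessian (fun y => schemeU μ X f n y t) x)| ≤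
      d * ckNorm 4 f * Matrix.trace S / (2 * n) := by
  have hn₀ : (n : ℝ) ≠ 0 := Nat.cast_ne_zero.2 (by omega)
  have hfloor : ⌊(n : ℝ) * (t + 1 / n)⌋₊ = ⌊(n : ℝ) * t⌋₊ + 1 := by
    rw [mul_add, mul_one_div_cancel hn₀, Nat.floor_add_one (by positivity)]
  have htrace (k : ℕ) : Matrix.trace (hessian (fun y => ∫ ω, f (y + (√n)⁻¹ • pSum X k ω) ∂μ) x) =
      ∑ i, ∫ ω, hessian f (x + (√n)⁻¹ • pSum X k ω) i i ∂μ := by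
    simp only [Matrix.trace, Matrix.diag]
    exact Finset.sum_congr rfl fun i _ => hessian_integral_comp_add (hf.of_le (by norm_num))
      ((hX.measurable_pSum k).const_smul (√n)⁻¹).aestronglyMeasurable x i i
  have hentry (i : Fin d) (z : Euc d) :
      ‖iteratedFDeriv ℝ 2 (fun z => hessian f z i i) z‖ ≤ ckNorm 4 f :=
    (norm_iteratedFDeriv_hessian_apply_le hf.1 i i z).trans
      (hf.norm_iteratedFDeriv_le_ckNorm le_rfl z)
  simp only [schemeU, hfloor, htrace, ← Finset.sum_sub_distrib]
  calc _ ≤ ∑ i : Fin d, |∫ ω, hessian f (x + (√n)⁻¹ • pSum X (⌊(n : ℝ) * t⌋₊ + 1) ω) i i ∂μ -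
          ∫ ω, hessian f (x + (√n)⁻¹ • pSum X ⌊(n : ℝ) * t⌋₊ ω) i i ∂μ| :=
        Finset.abs_sum_le_sum_abs _ _
    _ ≤ ∑ _i : Fin d, ckNorm 4 f / 2 * ((√n)⁻¹) ^ 2 * S.trace :=
        Finset.sum_le_sum fun i _ => hX.abs_integral_pSum_succ_sub_le
          (hf.hessian_apply (k := 2) i i) (hentry i) x _ _
    _ = d * ckNorm 4 f * Matrix.trace S / (2 * n) := by
        rw [Finset.sum_const, Finset.card_univ, Fintype.card_fin, nsmul_eq_mul, inv_pow,
          Real.sq_sqrt n.cast_nonneg]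
        field_simp

/-- **Time-increment bound for the Laplacian of the scheme**: for every `f ∈ C⁴(ℝ^d)`,
`n ≥ 1`, `x ∈ ℝ^d` and `t ≥ 0`,
`|tr(D²u_n(x, t + 1/n)) − tr(D²u_n(x,t))| ≤ d ‖f‖_{C⁴} tr(Σ) / (2n)`. -/
theorem scheme_hessian_time_increment
    {d : ℕ} (hd : 1 ≤ d) {Ω : Type} [MeasurableSpace Ω] (μ : Measure Ω)
    [IsProbabilityMeasure μ] (X : ℕ → Ω → Euc d) (S : Matrix (Fin d) (Fin d) ℝ)
    (hX : IsIIDCentered μ X S)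
    (f : Euc d → ℝ) (hf : MemCk 4 f)
    (n : ℕ) (hn : 1 ≤ n) (x : Euc d) (t : ℝ) (ht : 0 ≤ t) :
    |Matrix.trace (hessian (fun y => schemeU μ X f n y (t + 1 / n)) x) -
        Matrix.trace (hessian (fun y => schemeU μ X f n y t) x)| ≤
      d * ckNorm 4 f * Matrix.trace S / (2 * n) :=
  scheme_hessian_time_increment_general μ X S hX f hf n hn x t ht
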